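/- arXiv:2505.03719 — 4 statements merged into one kernel-verified Lean document; each statement's English description precedes it below -/
import Mathlib

section
/- Let f : ℝ^d → ℝ be μ-strongly convex (μ > 0) and L-smooth (L ≥ μ), and let A be a real p×d matrix with full row rank (rank A = p, so σmin(A) > 0). Define φ : ℝ^p → ℝ by φ(λ) = sup_{x∈ℝ^d} (−⟨λ, A x⟩ − f(x)). Then φ is (σmin(A)²/L)-strongly convex. -/
/-!
Write `f^*` for the convex conjugate, so that `φ = f^* ∘ (-Aᵀ)`. Evaluating the supremum at the
gradient step `x + L⁻¹ • (w - ∇f x)` and using the descent lemma gives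
`f^*(w) ≥ ⟪w, x⟫ - f x + ‖w - ∇f x‖² / (2L)` for all `x` and `w`. Bounding
`⟪a w₁ + b w₂, x⟫ - f x` through this inequality at `w₁` and `w₂`, together with
`a ‖u‖² + b ‖v‖² ≥ a b ‖u - v‖²`, shows that `f^*` is `L⁻¹`-strongly convex. Composing with `-Aᵀ`,
which satisfies `‖Aᵀ λ‖ ≥ σmin(A) ‖λ‖`, multiplies the modulus by `σmin(A)²`. The strong
convexity of `f` keeps all these suprema finite.
-/

open scoped RealInnerProductSpace
open Matrix

/-- The smallest singular value of a `p × d` matrix `A`, defined as the infimum of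
`‖Aᵀ λ‖` over unit vectors `λ ∈ ℝ^p`. -/
noncomputable def sigmaMin {p d : ℕ} (A : Matrix (Fin p) (Fin d) ℝ) : ℝ :=
  sInf ((fun lam : EuclideanSpace ℝ (Fin p) => ‖Matrix.toEuclideanLin Aᵀ lam‖) ''
    {lam | ‖lam‖ = 1})

open Set

section InnerProductSpace

variable {E : Type*} [NormedAddCommGroup E] [InnerProductSpace ℝ E] {f : E → ℝ}

lemma mul_mul_norm_sub_sq_le {a b : ℝ} (hab : a + b = 1) (u v : E) :
    a * b * ‖u - v‖ ^ 2 ≤ a * ‖u‖ ^ 2 + b * ‖v‖ ^ 2 := by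
  have hid : a * ‖u‖ ^ 2 + b * ‖v‖ ^ 2 = ‖a • u + b • v‖ ^ 2 + a * b * ‖u - v‖ ^ 2 := by
    obtain rfl : b = 1 - a := by linarith
    simp only [← real_inner_self_eq_norm_sq, inner_add_add_self, inner_sub_sub_self,
      real_inner_smul_left, real_inner_smul_right]
    ring
  nlinarith [sq_nonneg ‖a • u + b • v‖]

lemma bddAbove_range_inner_sub_of_quadratic_le {μ c : ℝ} (hμ : 0 < μ) (g : E)
    (hf : ∀ x, c + ⟪g, x⟫ + μ / 2 * ‖x‖ ^ 2 ≤ f x) (w : E) :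
    BddAbove (range fun x => ⟪w, x⟫ - f x) := by
  refine ⟨‖w - g‖ ^ 2 / (2 * μ) - c, ?_⟩
  rintro _ ⟨x, rfl⟩
  have hcs : ⟪w - g, x⟫ ≤ ‖w - g‖ * ‖x‖ := real_inner_le_norm _ _
  have hsq : ‖w - g‖ * ‖x‖ - μ / 2 * ‖x‖ ^ 2 ≤ ‖w - g‖ ^ 2 / (2 * μ) := by
    rw [le_div_iff₀ (by positivity)]
    nlinarith [sq_nonneg (‖w - g‖ - μ * ‖x‖)]
  rw [inner_sub_left] at hcs
  linarith [hf x]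

/-- The convex conjugate; where the supremum is unbounded, `⨆` returns the junk value `0`. -/
noncomputable def convexConjugate (f : E → ℝ) (w : E) : ℝ :=
  ⨆ x, ⟪w, x⟫ - f x

variable [CompleteSpace E]

lemma DifferentiableAt.hasDerivAt_comp_add_smul {x u : E} {t : ℝ}
    (hf : DifferentiableAt ℝ f (x + t • u)) :
    HasDerivAt (fun s : ℝ => f (x + s • u)) ⟪gradient f (x + t • u), u⟫ t := by
  have hline : HasDerivAt (fun s : ℝ => x + s • u) u t := by
    simpa using ((hasDerivAt_id t).smul_const u).const_add x
  simpa [Function.comp_def] using hf.hasGradientAt.hasFDerivAt.comp_hasDerivAt t hline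

lemma ConvexOn.add_inner_gradient_le (hc : ConvexOn ℝ univ f) {x : E}
    (hd : DifferentiableAt ℝ f x) (y : E) : f x + ⟪gradient f x, y - x⟫ ≤ f y := by
  have hline : ConvexOn ℝ univ fun s : ℝ => f (x + s • (y - x)) := by
    simpa [Function.comp_def, AffineMap.lineMap_apply_module', add_comm]
      using hc.comp_affineMap (AffineMap.lineMap x y)
  have hslope := hline.le_slope_of_hasDerivAt (mem_univ 0) (mem_univ 1) one_pos
    (DifferentiableAt.hasDerivAt_comp_add_smul (by simpa using hd))
  simp only [slope, zero_smul, add_zero, one_smul, add_sub_cancel, sub_zero, inv_one,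
    smul_eq_mul, one_mul, vsub_eq_sub] at hslope
  linarith

lemma le_add_inner_gradient_add_sq_of_lipschitz_gradient {L : ℝ} (hf : Differentiable ℝ f)
    (hlip : ∀ x y, ‖gradient f x - gradient f y‖ ≤ L * ‖x - y‖) (x u : E) :
    f (x + u) ≤ f x + ⟪gradient f x, u⟫ + L / 2 * ‖u‖ ^ 2 := by
  set g : ℝ → ℝ := fun t => f (x + t • u) - t * ⟪gradient f x, u⟫ - L / 2 * t ^ 2 * ‖u‖ ^ 2
  have hg : ∀ t, HasDerivAt g
      (⟪gradient f (x + t • u), u⟫ - ⟪gradient f x, u⟫ - L * t * ‖u‖ ^ 2) t := by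
    intro t
    refine (((hf _).hasDerivAt_comp_add_smul.sub ((hasDerivAt_id t).mul_const _)).sub
      (((hasDerivAt_pow 2 t).const_mul (L / 2)).mul_const _)).congr_deriv ?_
    simp only [one_mul, Nat.cast_ofNat]
    ring
  have hanti : AntitoneOn g (Ici 0) := by
    refine antitoneOn_of_hasDerivWithinAt_nonpos (convex_Ici 0)
      (fun t _ => (hg t).continuousAt.continuousWithinAt) (fun t _ => (hg t).hasDerivWithinAt) ?_
    intro t ht
    rw [interior_Ici, mem_Ioi] at ht
    have hgrad : ‖gradient f (x + t • u) - gradient f x‖ ≤ L * (t * ‖u‖) := by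
      simpa [norm_smul, abs_of_pos ht] using hlip (x + t • u) x
    have hinner : ⟪gradient f (x + t • u), u⟫ - ⟪gradient f x, u⟫ ≤ L * (t * ‖u‖) * ‖u‖ :=
      calc _ = ⟪gradient f (x + t • u) - gradient f x, u⟫ := (inner_sub_left _ _ _).symm
        _ ≤ ‖gradient f (x + t • u) - gradient f x‖ * ‖u‖ := real_inner_le_norm _ _
        _ ≤ L * (t * ‖u‖) * ‖u‖ := by gcongr
    linarith
  have hg10 : g 1 ≤ g 0 := hanti self_mem_Ici (mem_Ici.2 zero_le_one) zero_le_one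
  simp only [g, one_smul, zero_smul, add_zero] at hg10
  linarith

lemma StrongConvexOn.bddAbove_range_inner_sub {μ : ℝ} (hμ : 0 < μ)
    (hf : StrongConvexOn univ μ f) (hd : DifferentiableAt ℝ f 0) (w : E) :
    BddAbove (range fun x => ⟪w, x⟫ - f x) := by
  rw [strongConvexOn_iff_convex] at hf
  have hd' : DifferentiableAt ℝ (fun x => f x - μ / 2 * ‖x‖ ^ 2) 0 :=
    hd.sub ((contDiff_norm_sq ℝ (n := 1)).differentiable one_ne_zero 0 |>.const_mul _)
  refine bddAbove_range_inner_sub_of_quadratic_le (c := f 0)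
    (g := gradient (fun x => f x - μ / 2 * ‖x‖ ^ 2) 0) hμ (fun x => ?_) w
  have htangent := hf.add_inner_gradient_le hd' x
  simp only [norm_zero, sub_zero] at htangent
  linarith

variable {L : ℝ}

lemma inner_sub_add_sq_div_le_convexConjugate (hL : 0 < L) (hf : Differentiable ℝ f)
    (hlip : ∀ x y, ‖gradient f x - gradient f y‖ ≤ L * ‖x - y‖) {w : E}
    (hw : BddAbove (range fun x => ⟪w, x⟫ - f x)) (x : E) :
    ⟪w, x⟫ - f x + ‖w - gradient f x‖ ^ 2 / (2 * L) ≤ convexConjugate f w := by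
  set v := w - gradient f x
  have hstep := le_add_inner_gradient_add_sq_of_lipschitz_gradient hf hlip x (L⁻¹ • v)
  have hsup : ⟪w, x + L⁻¹ • v⟫ - f (x + L⁻¹ • v) ≤ convexConjugate f w := le_ciSup hw _
  have hv : ⟪w, v⟫ - ⟪gradient f x, v⟫ = ‖v‖ ^ 2 := by
    rw [← inner_sub_left, real_inner_self_eq_norm_sq]
  rw [inner_add_right, real_inner_smul_right] at hsup
  rw [real_inner_smul_right, norm_smul, Real.norm_of_nonneg (inv_nonneg.2 hL.le)] at hstep
  have hq : ‖v‖ ^ 2 / (2 * L) = L⁻¹ * (⟪w, v⟫ - ⟪gradient f x, v⟫) - L / 2 * (L⁻¹ * ‖v‖) ^ 2 := by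
    rw [hv]
    field_simp
    ring
  linarith

lemma strongConvexOn_convexConjugate (hL : 0 < L) (hf : Differentiable ℝ f)
    (hlip : ∀ x y, ‖gradient f x - gradient f y‖ ≤ L * ‖x - y‖)
    (hbdd : ∀ w : E, BddAbove (range fun x => ⟪w, x⟫ - f x)) :
    StrongConvexOn univ L⁻¹ (convexConjugate f) := by
  refine ⟨convex_univ, fun w₁ _ w₂ _ a b ha hb hab => ?_⟩
  refine ciSup_le fun x => ?_
  have h₁ := inner_sub_add_sq_div_le_convexConjugate hL hf hlip (hbdd w₁) x
  have h₂ := inner_sub_add_sq_div_le_convexConjugate hL hf hlip (hbdd w₂) x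
  have hsq := mul_mul_norm_sub_sq_le hab (w₁ - gradient f x) (w₂ - gradient f x)
  rw [sub_sub_sub_cancel_right] at hsq
  have hlin : ⟪a • w₁ + b • w₂, x⟫ - f x = a * (⟪w₁, x⟫ - f x) + b * (⟪w₂, x⟫ - f x) := by
    rw [inner_add_left, real_inner_smul_left, real_inner_smul_left]
    linear_combination f x * hab
  rw [hlin, smul_eq_mul, smul_eq_mul]
  have key : a * b * (L⁻¹ / 2 * ‖w₁ - w₂‖ ^ 2) ≤
      a * (‖w₁ - gradient f x‖ ^ 2 / (2 * L)) + b * (‖w₂ - gradient f x‖ ^ 2 / (2 * L)) :=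
    calc a * b * (L⁻¹ / 2 * ‖w₁ - w₂‖ ^ 2) = a * b * ‖w₁ - w₂‖ ^ 2 / (2 * L) := by ring
      _ ≤ (a * ‖w₁ - gradient f x‖ ^ 2 + b * ‖w₂ - gradient f x‖ ^ 2) / (2 * L) := by gcongr
      _ = _ := by ring
  linarith [mul_le_mul_of_nonneg_left h₁ ha, mul_le_mul_of_nonneg_left h₂ hb]

end InnerProductSpace

lemma StrongConvexOn.comp_linearMap {E F : Type*} [NormedAddCommGroup E] [NormedSpace ℝ E]
    [NormedAddCommGroup F] [NormedSpace ℝ F] {g : E → ℝ} {S : Set E} {m s : ℝ}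
    (hg : StrongConvexOn S m g) (hm : 0 ≤ m) (hs : 0 ≤ s) (T : F →ₗ[ℝ] E)
    (hT : ∀ y, s * ‖y‖ ≤ ‖T y‖) : StrongConvexOn (T ⁻¹' S) (s ^ 2 * m) (g ∘ T) := by
  refine ⟨hg.1.linear_preimage T, fun y₁ hy₁ y₂ hy₂ a b ha hb hab => ?_⟩
  have hgT := hg.2 hy₁ hy₂ ha hb hab
  rw [← map_smul, ← map_smul, ← map_add, ← map_sub] at hgT
  have hnorm : s ^ 2 * m / 2 * ‖y₁ - y₂‖ ^ 2 ≤ m / 2 * ‖T (y₁ - y₂)‖ ^ 2 :=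
    calc s ^ 2 * m / 2 * ‖y₁ - y₂‖ ^ 2 = m / 2 * (s * ‖y₁ - y₂‖) ^ 2 := by ring
      _ ≤ m / 2 * ‖T (y₁ - y₂)‖ ^ 2 := by gcongr; exact hT _
  have hab0 : 0 ≤ a * b := mul_nonneg ha hb
  simp only [Function.comp_apply] at hgT ⊢
  exact hgT.trans (by gcongr)

section sigmaMin

variable {p d : ℕ} (A : Matrix (Fin p) (Fin d) ℝ)

lemma sigmaMin_nonneg : 0 ≤ sigmaMin A :=
  Real.sInf_nonneg (by rintro _ ⟨lam, -, rfl⟩; exact norm_nonneg _)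

lemma sigmaMin_mul_norm_le (lam : EuclideanSpace ℝ (Fin p)) :
    sigmaMin A * ‖lam‖ ≤ ‖toEuclideanLin Aᵀ lam‖ := by
  rcases eq_or_ne lam 0 with rfl | hlam
  · simp
  have hn : 0 < ‖lam‖ := norm_pos_iff.2 hlam
  have hunit : ‖‖lam‖⁻¹ • lam‖ = 1 := by
    rw [norm_smul, norm_inv, norm_norm, inv_mul_cancel₀ hn.ne']
  have hle : sigmaMin A ≤ ‖toEuclideanLin Aᵀ (‖lam‖⁻¹ • lam)‖ :=
    csInf_le ⟨0, by rintro _ ⟨_, -, rfl⟩; exact norm_nonneg _⟩ ⟨_, hunit, rfl⟩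
  rw [map_smul, norm_smul, norm_inv, norm_norm] at hle
  rwa [← le_div_iff₀ hn, div_eq_inv_mul]

end sigmaMin

lemma inner_toEuclideanLin {p d : ℕ} (A : Matrix (Fin p) (Fin d) ℝ)
    (lam : EuclideanSpace ℝ (Fin p)) (x : EuclideanSpace ℝ (Fin d)) :
    ⟪lam, toEuclideanLin A x⟫ = ⟪toEuclideanLin Aᵀ lam, x⟫ := by
  rw [← conjTranspose_eq_transpose_of_trivial, toEuclideanLin_conjTranspose_eq_adjoint,
    LinearMap.adjoint_inner_left]

theorem stmt1_general {d p : ℕ} (μ L : ℝ) (hμ : 0 < μ) (hL : μ ≤ L)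
    (f : EuclideanSpace ℝ (Fin d) → ℝ)
    (hf : ConvexOn ℝ Set.univ (fun x => f x - μ / 2 * ‖x‖ ^ 2))
    (hfd : Differentiable ℝ f)
    (hfs : ∀ x y : EuclideanSpace ℝ (Fin d), ‖gradient f x - gradient f y‖ ≤ L * ‖x - y‖)
    (A : Matrix (Fin p) (Fin d) ℝ)
    (φ : EuclideanSpace ℝ (Fin p) → ℝ)
    (hφ : ∀ lam, φ lam = ⨆ x : EuclideanSpace ℝ (Fin d),
      (-⟪lam, Matrix.toEuclideanLin A x⟫ - f x)) :
    ConvexOn ℝ Set.univ (fun lam => φ lam - sigmaMin A ^ 2 / L / 2 * ‖lam‖ ^ 2) := by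
  set T : EuclideanSpace ℝ (Fin p) →ₗ[ℝ] EuclideanSpace ℝ (Fin d) := -toEuclideanLin Aᵀ
  have hφT : φ = convexConjugate f ∘ T := by
    funext lam
    simp only [hφ, convexConjugate, Function.comp_apply, T, LinearMap.neg_apply, inner_neg_left,
      inner_toEuclideanLin]
  have hT : ∀ lam, sigmaMin A * ‖lam‖ ≤ ‖T lam‖ := fun lam => by
    simpa [T] using sigmaMin_mul_norm_le A lam
  have hL0 : 0 < L := hμ.trans_le hL
  have hconj : StrongConvexOn univ L⁻¹ (convexConjugate f) :=
    strongConvexOn_convexConjugate hL0 hfd hfs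
      ((strongConvexOn_iff_convex.2 hf).bddAbove_range_inner_sub hμ (hfd 0))
  rw [← strongConvexOn_iff_convex, hφT, div_eq_mul_inv]
  exact hconj.comp_linearMap (inv_nonneg.2 hL0.le) (sigmaMin_nonneg A) T hT

/-- If `f : ℝ^d → ℝ` is `μ`-strongly convex (`μ > 0`) and `L`-smooth (`L ≥ μ`), and
`A` is a `p × d` real matrix with full row rank (`rank A = p`), then
`φ(λ) = sup_x (−⟪λ, A x⟫ − f x)` is `(σmin(A)²/L)`-strongly convex. -/
theorem stmt1 {d p : ℕ} (μ L : ℝ) (hμ : 0 < μ) (hL : μ ≤ L)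
    (f : EuclideanSpace ℝ (Fin d) → ℝ)
    (hf : ConvexOn ℝ Set.univ (fun x => f x - μ / 2 * ‖x‖ ^ 2))
    (hfd : Differentiable ℝ f)
    (hfs : ∀ x y : EuclideanSpace ℝ (Fin d), ‖gradient f x - gradient f y‖ ≤ L * ‖x - y‖)
    (A : Matrix (Fin p) (Fin d) ℝ) (hA : A.rank = p)
    (φ : EuclideanSpace ℝ (Fin p) → ℝ)
    (hφ : ∀ lam, φ lam = ⨆ x : EuclideanSpace ℝ (Fin d),
      (-⟪lam, Matrix.toEuclideanLin A x⟫ - f x)) :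
    ConvexOn ℝ Set.univ (fun lam => φ lam - sigmaMin A ^ 2 / L / 2 * ‖lam‖ ^ 2) :=
  stmt1_general μ L hμ hL f hf hfd hfs A φ hφ
end

section
/- Let G : ℝ^m → ℝ be convex and bounded below, let S be a real m×m symmetric positive semidefinite matrix, and let ρ > 0. Define F_ρ : ℝ^m → ℝ by F_ρ(y) = sup_{λ∈ℝ^m} (−⟨y, Sλ⟩ − G(λ) − (ρ/2)‖Sλ‖²). Then F_ρ is finite everywhere on ℝ^m, convex, differentiable, and its gradient is (1/ρ)-Lipschitz; i.e., F_ρ is (1/ρ)-smooth. -/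
/-!
Write the supremand as `φ(y, λ) = ψ (T λ) - G λ` with `ψ z = -⟪y, z⟫ - (ρ/2)‖z‖²`, which is
`ρ`-strongly concave. Strong concavity forces the images `T λₙ` of any maximizing sequence to be
Cauchy; their limit `p(y)` obeys the quadratic growth bound
`φ(y, λ) + (ρ/2)‖T λ - p(y)‖² ≤ F(y)`. This gives
`0 ≤ F(y') - F(y) + ⟪y' - y, p(y)⟫ ≤ ‖y' - y‖² / (2ρ)`, so `∇F(y) = -p(y)`, and testing the
growth bound at `y` along a maximizing sequence at `y'` (and symmetrically) gives
`ρ‖p(y) - p(y')‖² ≤ ⟪y - y', p(y') - p(y)⟫`, the `1/ρ`-Lipschitz bound. Convexity holds because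
`F` is a supremum of affine functions of `y`.
-/

open scoped RealInnerProductSpace
open Matrix Filter Set Topology

section AugmentedDual

variable {V H : Type*} [AddCommGroup V] [Module ℝ V] [NormedAddCommGroup H] [InnerProductSpace ℝ H]

lemma neg_inner_sub_half_mul_norm_sq_le {ρ : ℝ} (hρ : 0 < ρ) (y z : H) :
    -⟪y, z⟫ - ρ / 2 * ‖z‖ ^ 2 ≤ ‖y‖ ^ 2 / (2 * ρ) := by
  have h := norm_add_sq_real y (ρ • z)
  rw [inner_smul_right, norm_smul, Real.norm_of_nonneg hρ.le] at h
  rw [le_div_iff₀ (by positivity)]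
  nlinarith [sq_nonneg ‖y + ρ • z‖]

variable (ρ : ℝ) (G : V → ℝ) (T : V →ₗ[ℝ] H)

noncomputable def augDualTerm (y : H) (lam : V) : ℝ :=
  -⟪y, T lam⟫ - G lam - ρ / 2 * ‖T lam‖ ^ 2

noncomputable def augDual (y : H) : ℝ :=
  ⨆ lam, augDualTerm ρ G T y lam

variable {ρ G}

lemma augDualTerm_bddAbove (hρ : 0 < ρ) (hGb : BddBelow (range G)) (y : H) :
    BddAbove (range (augDualTerm ρ G T y)) := by
  obtain ⟨c, hc⟩ := hGb
  refine ⟨‖y‖ ^ 2 / (2 * ρ) - c, forall_mem_range.2 fun lam => ?_⟩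
  have := neg_inner_sub_half_mul_norm_sq_le hρ y (T lam)
  have := hc (mem_range_self lam)
  unfold augDualTerm
  linarith

lemma augDualTerm_le_augDual (hρ : 0 < ρ) (hGb : BddBelow (range G)) (y : H) (lam : V) :
    augDualTerm ρ G T y lam ≤ augDual ρ G T y :=
  le_ciSup (augDualTerm_bddAbove T hρ hGb y) lam

lemma augDualTerm_eq_sub (y y' : H) (lam : V) :
    augDualTerm ρ G T y' lam = augDualTerm ρ G T y lam - ⟪y' - y, T lam⟫ := by
  simp only [augDualTerm, inner_sub_left]
  ring

lemma augDualTerm_smul_add (lam : V) {y₁ y₂ : H} {a b : ℝ} (hab : a + b = 1) :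
    augDualTerm ρ G T (a • y₁ + b • y₂) lam
      = a * augDualTerm ρ G T y₁ lam + b * augDualTerm ρ G T y₂ lam := by
  obtain rfl := eq_sub_of_add_eq' hab
  simp only [augDualTerm, inner_add_left, real_inner_smul_left]
  ring

lemma augDualTerm_strongConcave (hG : ConvexOn ℝ univ G) (y : H) (lam₁ lam₂ : V) {a b : ℝ}
    (ha : 0 ≤ a) (hb : 0 ≤ b) (hab : a + b = 1) :
    a * augDualTerm ρ G T y lam₁ + b * augDualTerm ρ G T y lam₂
        + ρ / 2 * a * b * ‖T lam₁ - T lam₂‖ ^ 2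
      ≤ augDualTerm ρ G T y (a • lam₁ + b • lam₂) := by
  have hψ : StrongConcaveOn univ ρ fun z : H => -⟪y, z⟫ - ρ / 2 * ‖z‖ ^ 2 := by
    refine strongConcaveOn_iff_convex.2 ?_
    simp only [sub_add_cancel]
    exact (-innerSL ℝ y).toLinearMap.concaveOn convex_univ
  have h₁ := hψ.2 (mem_univ (T lam₁)) (mem_univ (T lam₂)) ha hb hab
  have h₂ := hG.2 (mem_univ lam₁) (mem_univ lam₂) ha hb hab
  simp only [smul_eq_mul] at h₁ h₂
  simp only [augDualTerm, map_add, map_smul]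
  linarith

lemma norm_sub_sq_le_of_augDualTerm (hρ : 0 < ρ) (hG : ConvexOn ℝ univ G)
    (hGb : BddBelow (range G)) (y : H) (lam₁ lam₂ : V) :
    ‖T lam₁ - T lam₂‖ ^ 2 ≤ 4 / ρ * ((augDual ρ G T y - augDualTerm ρ G T y lam₁)
      + (augDual ρ G T y - augDualTerm ρ G T y lam₂)) := by
  have hmid := augDualTerm_strongConcave (ρ := ρ) T hG y lam₁ lam₂ (a := 1 / 2) (b := 1 / 2)
    (by norm_num) (by norm_num) (by norm_num)
  have hle := augDualTerm_le_augDual T hρ hGb y ((1 / 2 : ℝ) • lam₁ + (1 / 2 : ℝ) • lam₂)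
  rw [div_mul_eq_mul_div, le_div_iff₀ hρ]
  linarith

lemma exists_seq_tendsto_augDual (hρ : 0 < ρ) (hGb : BddBelow (range G)) (y : H) :
    ∃ lam : ℕ → V,
      Tendsto (fun n => augDualTerm ρ G T y (lam n)) atTop (𝓝 (augDual ρ G T y)) := by
  obtain ⟨u, -, hu, hmem⟩ :=
    exists_seq_tendsto_sSup (range_nonempty _) (augDualTerm_bddAbove T hρ hGb y)
  choose lam hlam using hmem
  exact ⟨lam, by simp only [hlam]; exact hu⟩

lemma cauchySeq_of_tendsto_augDual (hρ : 0 < ρ) (hG : ConvexOn ℝ univ G)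
    (hGb : BddBelow (range G)) {y : H} {lam : ℕ → V}
    (hlam : Tendsto (fun n => augDualTerm ρ G T y (lam n)) atTop (𝓝 (augDual ρ G T y))) :
    CauchySeq fun n => T (lam n) := by
  set e : ℕ → ℝ := fun n => augDual ρ G T y - augDualTerm ρ G T y (lam n)
  have he : Tendsto e atTop (𝓝 0) := by
    simpa only [sub_self] using hlam.const_sub (augDual ρ G T y)
  have he₀ : ∀ n, 0 ≤ e n := fun n => sub_nonneg.2 (augDualTerm_le_augDual T hρ hGb y (lam n))
  rw [cauchySeq_iff_tendsto_dist_atTop_0]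
  refine squeeze_zero (fun _ => dist_nonneg) (g := fun n => √(4 / ρ * (e n.1 + e n.2)))
    (fun n => ?_) ?_
  · rw [dist_eq_norm, Real.le_sqrt (norm_nonneg _) 
      (mul_nonneg (by positivity) (add_nonneg (he₀ _) (he₀ _)))]
    exact norm_sub_sq_le_of_augDualTerm T hρ hG hGb y (lam n.1) (lam n.2)
  · rw [← prod_atTop_atTop_eq]
    have := ((he.comp tendsto_fst).add (he.comp tendsto_snd)).const_mul (4 / ρ) |>.sqrt
    simpa using this

variable (ρ G) in
/-- Stands in for `T λ*` at a maximizer `λ*`, which need not exist. -/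
def IsOptimalImage (y p : H) : Prop :=
  ∃ lam : ℕ → V, Tendsto (fun n => augDualTerm ρ G T y (lam n)) atTop (𝓝 (augDual ρ G T y)) ∧
    Tendsto (fun n => T (lam n)) atTop (𝓝 p)

lemma exists_isOptimalImage [CompleteSpace H] (hρ : 0 < ρ) (hG : ConvexOn ℝ univ G)
    (hGb : BddBelow (range G)) (y : H) : ∃ p, IsOptimalImage ρ G T y p := by
  obtain ⟨lam, hlam⟩ := exists_seq_tendsto_augDual T hρ hGb y
  obtain ⟨p, hp⟩ := cauchySeq_tendsto_of_complete (cauchySeq_of_tendsto_augDual T hρ hG hGb hlam)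
  exact ⟨p, lam, hlam, hp⟩

namespace IsOptimalImage

variable {T} {y p : H}

lemma add_half_mul_norm_sq_le (hp : IsOptimalImage ρ G T y p) (hρ : 0 < ρ)
    (hG : ConvexOn ℝ univ G) (hGb : BddBelow (range G)) (lam : V) :
    augDualTerm ρ G T y lam + ρ / 2 * ‖T lam - p‖ ^ 2 ≤ augDual ρ G T y := by
  obtain ⟨μ, hμ, hTμ⟩ := hp
  set F := augDual ρ G T y
  set r := ‖T lam - p‖
  -- compare `lam` with `t • lam + (1 - t) • μ n`, let `n → ∞` and then `t → 0⁺`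
  have hconv : ∀ t ∈ Ioo (0 : ℝ) 1, augDualTerm ρ G T y lam + ρ / 2 * (1 - t) * r ^ 2 ≤ F := by
    rintro t ⟨ht₀, ht₁⟩
    have hlim : Tendsto (fun n => t * augDualTerm ρ G T y lam + (1 - t) * augDualTerm ρ G T y (μ n)
        + ρ / 2 * t * (1 - t) * ‖T lam - T (μ n)‖ ^ 2) atTop
        (𝓝 (t * augDualTerm ρ G T y lam + (1 - t) * F + ρ / 2 * t * (1 - t) * r ^ 2)) :=
      ((hμ.const_mul _).const_add _).add
        (((tendsto_const_nhds.sub hTμ).norm.pow 2).const_mul _)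
    have hkey := le_of_tendsto' hlim fun n =>
      (augDualTerm_strongConcave T hG y lam (μ n) ht₀.le (sub_nonneg.2 ht₁.le)
        (add_sub_cancel t 1)).trans (augDualTerm_le_augDual T hρ hGb y _)
    nlinarith
  have hlim : Tendsto (fun t => augDualTerm ρ G T y lam + ρ / 2 * (1 - t) * r ^ 2) (𝓝[>] 0)
      (𝓝 (augDualTerm ρ G T y lam + ρ / 2 * r ^ 2)) :=
    tendsto_nhdsWithin_of_tendsto_nhds <|
      (by fun_prop : Continuous fun t : ℝ => augDualTerm ρ G T y lam + ρ / 2 * (1 - t) * r ^ 2)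
        |>.tendsto' 0 _ (by ring)
  exact le_of_tendsto hlim (eventually_of_mem (Ioo_mem_nhdsGT one_pos) hconv)

lemma augDual_sub_inner_le (hp : IsOptimalImage ρ G T y p) (hρ : 0 < ρ)
    (hGb : BddBelow (range G)) (y' : H) :
    augDual ρ G T y - ⟪y' - y, p⟫ ≤ augDual ρ G T y' := by
  obtain ⟨μ, hμ, hTμ⟩ := hp
  refine le_of_tendsto' (hμ.sub ((tendsto_const_nhds (x := y' - y)).inner hTμ)) fun n => ?_
  rw [← augDualTerm_eq_sub]
  exact augDualTerm_le_augDual T hρ hGb y' (μ n)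

lemma augDual_le (hp : IsOptimalImage ρ G T y p) (hρ : 0 < ρ) (hG : ConvexOn ℝ univ G)
    (hGb : BddBelow (range G)) (y' : H) :
    augDual ρ G T y' ≤ augDual ρ G T y - ⟪y' - y, p⟫ + ‖y' - y‖ ^ 2 / (2 * ρ) := by
  refine ciSup_le fun lam => ?_
  have hgrowth := hp.add_half_mul_norm_sq_le hρ hG hGb lam
  have hyoung := neg_inner_sub_half_mul_norm_sq_le hρ (y' - y) (T lam - p)
  rw [inner_sub_right] at hyoung
  rw [augDualTerm_eq_sub T y y']
  linarith

lemma hasGradientAt [CompleteSpace H] (hp : IsOptimalImage ρ G T y p) (hρ : 0 < ρ)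
    (hG : ConvexOn ℝ univ G) (hGb : BddBelow (range G)) : HasGradientAt (augDual ρ G T) (-p) y := by
  rw [hasGradientAt_iff_hasFDerivAt, hasFDerivAt_iff_isLittleO_nhds_zero]
  refine Asymptotics.IsBigO.trans_isLittleO ?_ (Asymptotics.isLittleO_norm_pow_id one_lt_two)
  refine Asymptotics.IsBigO.of_bound (1 / (2 * ρ)) (Eventually.of_forall fun h => ?_)
  have hlow := hp.augDual_sub_inner_le hρ hGb (y + h)
  have hup := hp.augDual_le hρ hG hGb (y + h)
  rw [add_sub_cancel_left] at hlow hup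
  rw [InnerProductSpace.toDual_apply_apply, inner_neg_left, real_inner_comm, Real.norm_eq_abs,
    norm_pow, norm_norm, one_div_mul_eq_div, abs_le]
  constructor <;> linarith [div_nonneg (sq_nonneg ‖h‖) (by positivity : (0 : ℝ) ≤ 2 * ρ)]

lemma add_inner_add_half_mul_norm_sq_le {y' p' : H} (hp : IsOptimalImage ρ G T y p)
    (hp' : IsOptimalImage ρ G T y' p') (hρ : 0 < ρ) (hG : ConvexOn ℝ univ G)
    (hGb : BddBelow (range G)) :
    augDual ρ G T y' + ⟪y' - y, p'⟫ + ρ / 2 * ‖p' - p‖ ^ 2 ≤ augDual ρ G T y := by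
  obtain ⟨μ, hμ, hTμ⟩ := hp'
  have hlim := (hμ.add ((tendsto_const_nhds (x := y' - y)).inner hTμ)).add
    (((hTμ.sub (tendsto_const_nhds (x := p))).norm.pow 2).const_mul (ρ / 2))
  refine le_of_tendsto' hlim fun n => ?_
  have := hp.add_half_mul_norm_sq_le hρ hG hGb (μ n)
  rw [augDualTerm_eq_sub T y y']
  linarith

lemma norm_sub_le {y' p' : H} (hp : IsOptimalImage ρ G T y p) (hp' : IsOptimalImage ρ G T y' p')
    (hρ : 0 < ρ) (hG : ConvexOn ℝ univ G) (hGb : BddBelow (range G)) :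
    ‖p - p'‖ ≤ 1 / ρ * ‖y - y'‖ := by
  have h₁ := hp.add_inner_add_half_mul_norm_sq_le hp' hρ hG hGb
  have h₂ := hp'.add_inner_add_half_mul_norm_sq_le hp hρ hG hGb
  have hcs := real_inner_le_norm (y - y') (p' - p)
  rw [norm_sub_rev p' p] at h₁ hcs
  rw [inner_sub_left, inner_sub_right, inner_sub_right] at hcs
  rw [inner_sub_left] at h₁ h₂
  have hsq : ρ * ‖p - p'‖ * ‖p - p'‖ ≤ ‖y - y'‖ * ‖p - p'‖ := by
    rw [mul_assoc, ← sq]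
    linarith
  rw [one_div_mul_eq_div, le_div_iff₀ hρ, mul_comm]
  rcases (norm_nonneg (p - p')).eq_or_lt with h₀ | hpos
  · rw [← h₀, mul_zero]
    exact norm_nonneg _
  · exact le_of_mul_le_mul_right hsq hpos

end IsOptimalImage

lemma convexOn_augDual (hρ : 0 < ρ) (hGb : BddBelow (range G)) :
    ConvexOn ℝ univ (augDual ρ G T) := by
  refine ⟨convex_univ, fun y₁ _ y₂ _ a b ha hb hab => ciSup_le fun lam => ?_⟩
  rw [augDualTerm_smul_add T lam hab, smul_eq_mul, smul_eq_mul]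
  gcongr <;> exact augDualTerm_le_augDual T hρ hGb _ lam

end AugmentedDual

theorem stmt3_general {m : ℕ} (ρ : ℝ) (hρ : 0 < ρ)
    (G : EuclideanSpace ℝ (Fin m) → ℝ)
    (hG : ConvexOn ℝ Set.univ G)
    (hGb : BddBelow (Set.range G))
    (S : Matrix (Fin m) (Fin m) ℝ)
    (F : EuclideanSpace ℝ (Fin m) → ℝ)
    (hF : ∀ y, F y = ⨆ lam : EuclideanSpace ℝ (Fin m),
      (-⟪y, Matrix.toEuclideanLin S lam⟫ - G lam
        - ρ / 2 * ‖Matrix.toEuclideanLin S lam‖ ^ 2)) :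
    -- finite everywhere: the supremand is bounded above at every `y`
    (∀ y : EuclideanSpace ℝ (Fin m), BddAbove (Set.range
        fun lam : EuclideanSpace ℝ (Fin m) =>
          -⟪y, Matrix.toEuclideanLin S lam⟫ - G lam
            - ρ / 2 * ‖Matrix.toEuclideanLin S lam‖ ^ 2)) ∧
    ConvexOn ℝ Set.univ F ∧
    Differentiable ℝ F ∧
    (∀ y y' : EuclideanSpace ℝ (Fin m),
        ‖gradient F y - gradient F y'‖ ≤ (1 / ρ) * ‖y - y'‖) := by
  set T := Matrix.toEuclideanLin S
  obtain rfl : F = augDual ρ G T := funext hF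
  choose p hp using exists_isOptimalImage T hρ hG hGb
  have hgrad : ∀ y, HasGradientAt (augDual ρ G T) (-p y) y :=
    fun y => (hp y).hasGradientAt hρ hG hGb
  refine ⟨augDualTerm_bddAbove T hρ hGb, convexOn_augDual T hρ hGb,
    fun y => (hgrad y).differentiableAt, fun y y' => ?_⟩
  rw [(hgrad y).gradient, (hgrad y').gradient, neg_sub_neg, norm_sub_rev]
  exact (hp y).norm_sub_le (hp y') hρ hG hGb

/-- Let `G : ℝ^m → ℝ` be convex and bounded below, `S` a symmetric positive semidefinite
`m × m` matrix, and `ρ > 0`.  Then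
`F_ρ(y) = sup_λ (−⟪y, S λ⟫ − G(λ) − (ρ/2)‖S λ‖²)` is finite everywhere, convex,
differentiable, and its gradient is `(1/ρ)`-Lipschitz, i.e. `F_ρ` is `(1/ρ)`-smooth. -/
theorem stmt3 {m : ℕ} (ρ : ℝ) (hρ : 0 < ρ)
    (G : EuclideanSpace ℝ (Fin m) → ℝ)
    (hG : ConvexOn ℝ Set.univ G)
    (hGb : BddBelow (Set.range G))
    (S : Matrix (Fin m) (Fin m) ℝ) (hSsymm : S.IsSymm) (hSpsd : S.PosSemidef)
    (F : EuclideanSpace ℝ (Fin m) → ℝ)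
    (hF : ∀ y, F y = ⨆ lam : EuclideanSpace ℝ (Fin m),
      (-⟪y, Matrix.toEuclideanLin S lam⟫ - G lam
        - ρ / 2 * ‖Matrix.toEuclideanLin S lam‖ ^ 2)) :
    -- finite everywhere: the supremand is bounded above at every `y`
    (∀ y : EuclideanSpace ℝ (Fin m), BddAbove (Set.range
        fun lam : EuclideanSpace ℝ (Fin m) =>
          -⟪y, Matrix.toEuclideanLin S lam⟫ - G lam
            - ρ / 2 * ‖Matrix.toEuclideanLin S lam‖ ^ 2)) ∧
    ConvexOn ℝ Set.univ F ∧
    Differentiable ℝ F ∧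
    (∀ y y' : EuclideanSpace ℝ (Fin m),
        ‖gradient F y - gradient F y'‖ ≤ (1 / ρ) * ‖y - y'‖) :=
  stmt3_general ρ hρ G hG hGb S F hF
end

section
/- Let V ⊆ ℝ^m be a linear subspace and let F : ℝ^m → ℝ be convex, differentiable, and L-smooth, with F μ-strongly convex on V for some 0 < μ < L; suppose ∇F(v) ∈ V for every v ∈ V and F attains its global minimum at some y* ∈ V. Set κ = L/μ and β = (√κ − 1)/(√κ + 1). Let ε₁, ε₂, … ≥ 0 and define sequences by y⁰ = v⁰ = 0 and, for k ≥ 0: y^{k+1} = v^k − (1/L)(∇F(v^k) + e^{k+1}) where e^{k+1} ∈ V and ‖e^{k+1}‖ ≤ ε_{k+1}, and v^{k+1} = y^{k+1} + β(y^{k+1} − y^k). Then for all k ≥ 1: F(y^k) − F(y*) ≤ (1 − 1/√κ)^k · ( √(2(F(y⁰) − F(y*))) + √(2/μ) · Σ_{i=1}^{k} (1 − 1/√κ)^{−i/2} ε_i )². -/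
/-!
A Lyapunov argument. With `s = √κ` and `z_k = y_k + (s + 1) (v_k - y_k)`, the potential
`Φ_k = F(y_k) - F(y*) + μ/2 ‖z_k - y*‖²` satisfies
`Φ_{k+1} ≤ (1 - 1/s) Φ_k + ‖e_{k+1}‖ ‖z_{k+1} - y*‖ / s`: add the descent lemma at `v_k` to
the first-order strong convexity inequalities at `v_k` towards `y*` and towards `y_k`, with
weights `1/s` and `1 - 1/s`. All these points lie in `V`, where strong convexity holds. Since
`μ/2 ‖z_{k+1} - y*‖² ≤ Φ_{k+1}`, this is a quadratic inequality in `√Φ_{k+1}` giving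
`√Φ_{k+1} ≤ √(1 - 1/s) √Φ_k + √(2/μ) ε_{k+1}`, which unrolls to the bound since
`Φ_0 ≤ 2 (F(y_0) - F(y*))`.
-/

open scoped RealInnerProductSpace Gradient

section Calculus

variable {E : Type*} [NormedAddCommGroup E] [InnerProductSpace ℝ E] [CompleteSpace E]
  {F : E → ℝ}

theorem hasDerivAt_comp_add_smul {u d : E} {t : ℝ} (hF : DifferentiableAt ℝ F (u + t • d)) :
    HasDerivAt (fun r : ℝ => F (u + r • d)) ⟪∇ F (u + t • d), d⟫ t := by
  have hline : HasDerivAt (fun r : ℝ => u + r • d) d t := by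
    simpa using ((hasDerivAt_id t).smul_const d).const_add u
  have := (hasGradientAt_iff_hasFDerivAt.1 hF.hasGradientAt).comp_hasDerivAt t hline
  simp only [InnerProductSpace.toDual_apply_apply] at this
  exact this

theorem IsLocalMin.gradient_eq_zero {x : E} (h : IsLocalMin F x) : ∇ F x = 0 := by
  simp [gradient, h.fderiv_eq_zero]

theorem le_add_inner_gradient_add_sq {L : ℝ} (hF : Differentiable ℝ F)
    (hL : ∀ u v, ‖∇ F u - ∇ F v‖ ≤ L * ‖u - v‖) (u w : E) :
    F w ≤ F u + ⟪∇ F u, w - u⟫ + L / 2 * ‖w - u‖ ^ 2 := by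
  set d := w - u
  set ψ : ℝ → ℝ := fun t => F (u + t • d) - t * ⟪∇ F u, d⟫ - L / 2 * t ^ 2 * ‖d‖ ^ 2
  have hψ' : ∀ t, HasDerivAt ψ (⟪∇ F (u + t • d) - ∇ F u, d⟫ - L * t * ‖d‖ ^ 2) t := fun t =>
    (((hasDerivAt_comp_add_smul (u := u) (d := d) (hF _)).sub
      ((hasDerivAt_id t).mul_const ⟪∇ F u, d⟫)).sub
      (((hasDerivAt_pow 2 t).const_mul (L / 2)).mul_const (‖d‖ ^ 2))).congr_deriv
      (by rw [inner_sub_left]; ring)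
  have hψ'_nonpos : ∀ t ∈ interior (Set.Ici (0 : ℝ)),
      ⟪∇ F (u + t • d) - ∇ F u, d⟫ - L * t * ‖d‖ ^ 2 ≤ 0 := by
    intro t ht
    rw [interior_Ici] at ht
    rw [sub_nonpos]
    calc ⟪∇ F (u + t • d) - ∇ F u, d⟫ ≤ ‖∇ F (u + t • d) - ∇ F u‖ * ‖d‖ := real_inner_le_norm _ _
      _ ≤ L * ‖u + t • d - u‖ * ‖d‖ := by gcongr; exact hL _ _
      _ = L * t * ‖d‖ ^ 2 := by
        rw [add_sub_cancel_left, norm_smul, Real.norm_of_nonneg ht.le]; ring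
  have hψ_anti := antitoneOn_of_hasDerivWithinAt_nonpos (convex_Ici 0)
    (fun t _ => (hψ' t).continuousAt.continuousWithinAt) (fun t _ => (hψ' t).hasDerivWithinAt)
    hψ'_nonpos
  have := hψ_anti (Set.mem_Ici.2 le_rfl) (Set.mem_Ici.2 zero_le_one) zero_le_one
  simp only [ψ, zero_smul, one_smul, add_zero, zero_mul, one_pow, mul_one, sub_zero, d,
    add_sub_cancel] at this
  linarith

theorem StrongConvexOn.add_inner_gradient_add_sq_le {s : Set E} {μ : ℝ}
    (hF : StrongConvexOn s μ F) {u w : E} (hu : u ∈ s) (hw : w ∈ s)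
    (hFw : DifferentiableAt ℝ F w) :
    F w + ⟪∇ F w, u - w⟫ + μ / 2 * ‖u - w‖ ^ 2 ≤ F u := by
  set d := u - w
  set φ : ℝ → ℝ := fun t => F (w + t • d)
  have hslope : Filter.Tendsto (slope φ 0) (nhdsWithin 0 (Set.Ioi 0)) (nhds ⟪∇ F w, d⟫) :=
    (hasDerivAt_iff_tendsto_slope_left_right.1
      (by simpa using hasDerivAt_comp_add_smul (u := w) (d := d) (t := 0) (by simpa using hFw))).2
  have hbound : Filter.Tendsto (fun t : ℝ => F u - F w - μ / 2 * ((1 - t) * ‖d‖ ^ 2))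
      (nhdsWithin 0 (Set.Ioi 0)) (nhds (F u - F w - μ / 2 * ‖d‖ ^ 2)) := by
    have : Continuous (fun t : ℝ => F u - F w - μ / 2 * ((1 - t) * ‖d‖ ^ 2)) := by fun_prop
    simpa using (this.tendsto 0).mono_left nhdsWithin_le_nhds
  suffices ⟪∇ F w, d⟫ ≤ F u - F w - μ / 2 * ‖d‖ ^ 2 by linarith
  refine le_of_tendsto_of_tendsto hslope hbound ?_
  filter_upwards [Ioc_mem_nhdsGT (zero_lt_one' ℝ)] with t ⟨ht0, ht1⟩
  have hconv := hF.2 hu hw ht0.le (sub_nonneg.2 ht1) (add_sub_cancel t 1)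
  rw [show t • u + (1 - t) • w = w + t • d by simp only [d]; module] at hconv
  rw [slope_def_field, sub_zero, div_le_iff₀ ht0]
  simp only [φ, zero_smul, add_zero, smul_eq_mul] at hconv ⊢
  linarith

end Calculus

theorem le_add_of_sq_le_sq_add_mul {a b c : ℝ} (hb : 0 ≤ b) (hc : 0 ≤ c)
    (h : a ^ 2 ≤ b ^ 2 + c * a) : a ≤ b + c := by
  nlinarith

theorem le_pow_mul_add_sum_of_le_mul_add {a c : ℕ → ℝ} {r : ℝ} (hr : 0 < r)
    (h : ∀ k, a (k + 1) ≤ r * a k + c (k + 1)) (k : ℕ) :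
    a k ≤ r ^ k * (a 0 + ∑ i ∈ Finset.Icc 1 k, (r ^ i)⁻¹ * c i) := by
  induction k with
  | zero => simp
  | succ k ih =>
    calc a (k + 1) ≤ r * a k + c (k + 1) := h k
      _ ≤ r * (r ^ k * (a 0 + ∑ i ∈ Finset.Icc 1 k, (r ^ i)⁻¹ * c i)) + c (k + 1) := by gcongr
      _ = r ^ (k + 1) * (a 0 + ∑ i ∈ Finset.Icc 1 (k + 1), (r ^ i)⁻¹ * c i) := by
        rw [Finset.sum_Icc_succ_top (by omega)]
        field_simp
        ring

theorem Real.rpow_neg_natCast_div_two {q : ℝ} (hq : 0 ≤ q) (i : ℕ) :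
    q ^ (-(i : ℝ) / 2) = (√q ^ i)⁻¹ := by
  rw [Real.sqrt_eq_rpow, ← Real.rpow_natCast, ← Real.rpow_mul hq, ← Real.rpow_neg hq]
  ring_nf

section Nesterov

variable {E : Type*} [NormedAddCommGroup E] [InnerProductSpace ℝ E]

noncomputable def nesterovExtrapolation (s : ℝ) (y v : E) : E := y + (s + 1) • (v - y)

noncomputable def nesterovPotential (F : E → ℝ) (μ s : ℝ) (x y v : E) : ℝ :=
  F y - F x + μ / 2 * ‖nesterovExtrapolation s y v - x‖ ^ 2

variable {F : E → ℝ} {μ s : ℝ} {x y v : E}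

theorem sub_le_nesterovPotential (hμ : 0 ≤ μ) : F y - F x ≤ nesterovPotential F μ s x y v :=
  le_add_of_nonneg_right (by positivity)

theorem nesterovPotential_nonneg (hμ : 0 ≤ μ) (hmin : ∀ z, F x ≤ F z) :
    0 ≤ nesterovPotential F μ s x y v :=
  (sub_nonneg.2 (hmin y)).trans (sub_le_nesterovPotential hμ)

theorem norm_nesterovExtrapolation_sub_le (hμ : 0 < μ) (hmin : ∀ z, F x ≤ F z) :
    ‖nesterovExtrapolation s y v - x‖ ≤ √(2 / μ) * √(nesterovPotential F μ s x y v) := by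
  rw [← Real.sqrt_mul (by positivity), Real.le_sqrt (norm_nonneg _)
    (mul_nonneg (by positivity) (nesterovPotential_nonneg hμ.le hmin)), div_mul_eq_mul_div,
    le_div_iff₀' hμ]
  have := hmin y
  unfold nesterovPotential
  linarith

theorem nesterovPotential_succ_le {L : ℝ} {y' v' g e : E}
    (hμ : 0 < μ) (hs : 1 ≤ s) (hL : L = μ * s ^ 2)
    (hy' : y' = v - (1 / L) • (g + e)) (hv' : v' = y' + ((s - 1) / (s + 1)) • (y' - y))
    (hdesc : F y' ≤ F v + ⟪g, y' - v⟫ + L / 2 * ‖y' - v‖ ^ 2)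
    (hx : F v + ⟪g, x - v⟫ + μ / 2 * ‖x - v‖ ^ 2 ≤ F x)
    (hy : F v + ⟪g, y - v⟫ + μ / 2 * ‖y - v‖ ^ 2 ≤ F y) :
    nesterovPotential F μ s x y' v' ≤ (1 - 1 / s) * nesterovPotential F μ s x y v
      + 1 / s * (‖e‖ * ‖nesterovExtrapolation s y' v' - x‖) := by
  have hs0 : s ≠ 0 := by positivity
  have hs1 : s + 1 ≠ 0 := by positivity
  have hL0 : L ≠ 0 := by rw [hL]; positivity
  have hz : nesterovExtrapolation s y v - x = (v - x) + s • (v - y) := by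
    simp only [nesterovExtrapolation]; module
  have hz' : nesterovExtrapolation s y' v' - x =
      (1 - 1 / s) • ((v - x) + s • (v - y)) + (1 / s) • (v - x) - (s / L) • (g + e) := by
    simp only [nesterovExtrapolation, hv', hy']
    match_scalars <;> field_simp <;> ring
  rw [show y' - v = -((1 / L) • (g + e)) by rw [hy']; abel] at hdesc
  rw [← neg_sub v x] at hx
  rw [← neg_sub v y] at hy
  simp only [nesterovPotential]
  rw [hz, hz']
  generalize v - x = a at *
  generalize v - y = d at *
  set z' := (1 - 1 / s) • (a + s • d) + (1 / s) • a - (s / L) • (g + e)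
  have hCS : -⟪e, z'⟫ ≤ ‖e‖ * ‖z'‖ := by
    rw [neg_le]; exact neg_le_of_abs_le (abs_real_inner_le_norm e z')
  -- The weights of `hdesc`, `hx`, `hy` are `1`, `1/s`, `1 - 1/s`; the last term is the slack.
  have hid : μ / 2 * ‖z'‖ ^ 2 - (1 - 1 / s) * (μ / 2 * ‖a + s • d‖ ^ 2) =
      -⟪g, -((1 / L) • (g + e))⟫ - L / 2 * ‖-((1 / L) • (g + e))‖ ^ 2
      + 1 / s * (⟪g, -a⟫ + μ / 2 * ‖-a‖ ^ 2) + (1 - 1 / s) * (⟪g, -d⟫ + μ / 2 * ‖-d‖ ^ 2)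
      - 1 / s * ⟪e, z'⟫ - (1 - 1 / s) * (μ / 2) * (s + 1) * ‖d‖ ^ 2 := by
    simp only [z', hL, ← real_inner_self_eq_norm_sq, inner_sub_left, inner_sub_right,
      inner_add_left, inner_add_right, inner_neg_left, inner_neg_right,
      real_inner_smul_right, real_inner_comm]
    field_simp
    ring
  have hθ : 0 ≤ 1 / s := by positivity
  have hθ' : 0 ≤ 1 - 1 / s := by rw [sub_nonneg, div_le_one (by positivity)]; exact hs
  have hN : 0 ≤ (1 - 1 / s) * (μ / 2) * (s + 1) * ‖d‖ ^ 2 := by positivity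
  linarith [mul_le_mul_of_nonneg_left hx hθ, mul_le_mul_of_nonneg_left hy hθ',
    mul_le_mul_of_nonneg_left hCS hθ]

end Nesterov

section InexactNesterov

variable {E : Type*} [NormedAddCommGroup E] [InnerProductSpace ℝ E] [CompleteSpace E]
  {F : E → ℝ} {S : Set E} {μ L s : ℝ} {x : E}

theorem sqrt_nesterovPotential_succ_le {y v y' v' e : E} (hμ : 0 < μ) (hs : 1 ≤ s)
    (hL : L = μ * s ^ 2) (hF : Differentiable ℝ F)
    (hsmooth : ∀ u w, ‖∇ F u - ∇ F w‖ ≤ L * ‖u - w‖) (hsc : StrongConvexOn S μ F)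
    (hx : x ∈ S) (hmin : ∀ z, F x ≤ F z) (hy : y ∈ S) (hv : v ∈ S)
    (hy' : y' = v - (1 / L) • (∇ F v + e)) (hv' : v' = y' + ((s - 1) / (s + 1)) • (y' - y)) :
    √(nesterovPotential F μ s x y' v') ≤
      √(1 - 1 / s) * √(nesterovPotential F μ s x y v) + √(2 / μ) * ‖e‖ := by
  have hstep := nesterovPotential_succ_le hμ hs hL hy' hv'
    (le_add_inner_gradient_add_sq hF hsmooth v y') (hsc.add_inner_gradient_add_sq_le hx hv (hF v))
    (hsc.add_inner_gradient_add_sq_le hy hv (hF v))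
  have hθ : 1 / s ≤ 1 := by rw [div_le_one (by positivity)]; exact hs
  have hθ' : 0 ≤ 1 - 1 / s := sub_nonneg.2 hθ
  have hΦ' := nesterovPotential_nonneg (s := s) (y := y') (v := v') hμ.le hmin
  have hΦ := nesterovPotential_nonneg (s := s) (y := y) (v := v) hμ.le hmin
  refine le_add_of_sq_le_sq_add_mul (by positivity) (by positivity) ?_
  rw [Real.sq_sqrt hΦ', mul_pow, Real.sq_sqrt hθ', Real.sq_sqrt hΦ]
  calc nesterovPotential F μ s x y' v'
      ≤ (1 - 1 / s) * nesterovPotential F μ s x y v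
        + 1 / s * (‖e‖ * ‖nesterovExtrapolation s y' v' - x‖) := hstep
    _ ≤ (1 - 1 / s) * nesterovPotential F μ s x y v
        + 1 * (‖e‖ * (√(2 / μ) * √(nesterovPotential F μ s x y' v'))) := by
      gcongr
      exact norm_nesterovExtrapolation_sub_le hμ hmin
    _ = _ := by ring

theorem nesterovPotential_self_le {y : E} (hF : DifferentiableAt ℝ F x)
    (hsc : StrongConvexOn S μ F) (hx : x ∈ S) (hmin : ∀ z, F x ≤ F z) (hy : y ∈ S) :
    nesterovPotential F μ s x y y ≤ 2 * (F y - F x) := by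
  have := hsc.add_inner_gradient_add_sq_le hy hx hF
  rw [IsLocalMin.gradient_eq_zero (Filter.Eventually.of_forall hmin), inner_zero_left] at this
  simp only [nesterovPotential, nesterovExtrapolation, sub_self, smul_zero, add_zero]
  linarith

theorem inexactNesterov_iterates_mem {V : Submodule ℝ E} {c β : ℝ} {y v e : ℕ → E}
    (hgrad : ∀ u ∈ V, ∇ F u ∈ V) (he : ∀ k, e (k + 1) ∈ V) (hy0 : y 0 ∈ V) (hv0 : v 0 ∈ V)
    (hy : ∀ k, y (k + 1) = v k - c • (∇ F (v k) + e (k + 1)))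
    (hv : ∀ k, v (k + 1) = y (k + 1) + β • (y (k + 1) - y k)) (k : ℕ) : y k ∈ V ∧ v k ∈ V := by
  induction k with
  | zero => exact ⟨hy0, hv0⟩
  | succ k ih =>
    have hy' : y (k + 1) ∈ V := by
      rw [hy k]; exact V.sub_mem ih.2 (V.smul_mem c (V.add_mem (hgrad _ ih.2) (he k)))
    exact ⟨hy', by rw [hv k]; exact V.add_mem hy' (V.smul_mem β (V.sub_mem hy' ih.1))⟩

theorem inexactNesterov_sub_le {ε : ℕ → ℝ} {y v e : ℕ → E} (hμ : 0 < μ) (hs : 1 < s)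
    (hL : L = μ * s ^ 2) (hF : Differentiable ℝ F)
    (hsmooth : ∀ u w, ‖∇ F u - ∇ F w‖ ≤ L * ‖u - w‖) (hsc : StrongConvexOn S μ F)
    (hx : x ∈ S) (hmin : ∀ z, F x ≤ F z) (hmem : ∀ k, y k ∈ S ∧ v k ∈ S)
    (heε : ∀ k, ‖e (k + 1)‖ ≤ ε (k + 1)) (hv0 : v 0 = y 0)
    (hy : ∀ k, y (k + 1) = v k - (1 / L) • (∇ F (v k) + e (k + 1)))
    (hv : ∀ k, v (k + 1) = y (k + 1) + ((s - 1) / (s + 1)) • (y (k + 1) - y k)) (k : ℕ) :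
    F (y k) - F x ≤ (1 - 1 / s) ^ k *
      (√(2 * (F (y 0) - F x))
        + √(2 / μ) * ∑ i ∈ Finset.Icc 1 k, (√(1 - 1 / s) ^ i)⁻¹ * ε i) ^ 2 := by
  set Φ := fun k => nesterovPotential F μ s x (y k) (v k)
  have hq : 0 < 1 - 1 / s := by rw [sub_pos, div_lt_one (by positivity)]; exact hs
  have hstep (k : ℕ) : √(Φ (k + 1)) ≤ √(1 - 1 / s) * √(Φ k) + √(2 / μ) * ε (k + 1) :=
    (sqrt_nesterovPotential_succ_le hμ hs.le hL hF hsmooth hsc hx hmin (hmem k).1 (hmem k).2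
      (hy k) (hv k)).trans (by gcongr; exact heε k)
  have h0 : √(Φ 0) ≤ √(2 * (F (y 0) - F x)) := Real.sqrt_le_sqrt <| by
    simpa only [Φ, hv0] using nesterovPotential_self_le (hF x) hsc hx hmin (hmem 0).1
  have hsum : ∑ i ∈ Finset.Icc 1 k, (√(1 - 1 / s) ^ i)⁻¹ * (√(2 / μ) * ε i) =
      √(2 / μ) * ∑ i ∈ Finset.Icc 1 k, (√(1 - 1 / s) ^ i)⁻¹ * ε i := by
    rw [Finset.mul_sum]; exact Finset.sum_congr rfl fun i _ => mul_left_comm _ _ _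
  have hk := le_pow_mul_add_sum_of_le_mul_add (a := fun k => √(Φ k))
    (c := fun k => √(2 / μ) * ε k) (Real.sqrt_pos.2 hq) hstep k
  rw [hsum] at hk
  calc F (y k) - F x ≤ √(Φ k) ^ 2 := by
        rw [Real.sq_sqrt (nesterovPotential_nonneg hμ.le hmin)]
        exact sub_le_nesterovPotential hμ.le
    _ ≤ (√(1 - 1 / s) ^ k * (√(2 * (F (y 0) - F x))
          + √(2 / μ) * ∑ i ∈ Finset.Icc 1 k, (√(1 - 1 / s) ^ i)⁻¹ * ε i)) ^ 2 := by
        gcongr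
        exact hk.trans (by gcongr)
    _ = _ := by rw [mul_pow, ← pow_mul, mul_comm k, pow_mul, Real.sq_sqrt hq.le]

end InexactNesterov

theorem stmt9_general {m : ℕ} (μ L : ℝ) (hμ : 0 < μ) (hμL : μ < L)
    (V : Submodule ℝ (EuclideanSpace ℝ (Fin m)))
    (F : EuclideanSpace ℝ (Fin m) → ℝ)
    (hFdiff : Differentiable ℝ F)
    (hFsmooth : ∀ u v : EuclideanSpace ℝ (Fin m),
      ‖gradient F u - gradient F v‖ ≤ L * ‖u - v‖)
    (hFsc : ∀ u ∈ V, ∀ v ∈ V, ∀ θ : ℝ, 0 ≤ θ → θ ≤ 1 →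
      F (θ • u + (1 - θ) • v) ≤ θ * F u + (1 - θ) * F v
        - μ / 2 * (θ * (1 - θ) * ‖u - v‖ ^ 2))
    (hFgradV : ∀ v ∈ V, gradient F v ∈ V)
    (ystar : EuclideanSpace ℝ (Fin m)) (hystarV : ystar ∈ V)
    (hystar : ∀ z, F ystar ≤ F z)
    (κ β : ℝ) (hκ : κ = L / μ) (hβ : β = (Real.sqrt κ - 1) / (Real.sqrt κ + 1))
    (ε : ℕ → ℝ)
    (y v : ℕ → EuclideanSpace ℝ (Fin m))
    (e : ℕ → EuclideanSpace ℝ (Fin m))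
    (hy0 : y 0 = 0) (hv0 : v 0 = 0)
    (heV : ∀ k, e (k + 1) ∈ V)
    (heε : ∀ k, ‖e (k + 1)‖ ≤ ε (k + 1))
    (hyk : ∀ k, y (k + 1) = v k - (1 / L) • (gradient F (v k) + e (k + 1)))
    (hvk : ∀ k, v (k + 1) = y (k + 1) + β • (y (k + 1) - y k)) :
    ∀ k : ℕ, 1 ≤ k →
      F (y k) - F ystar ≤ (1 - 1 / Real.sqrt κ) ^ k *
        (Real.sqrt (2 * (F (y 0) - F ystar))
          + Real.sqrt (2 / μ) *
            ∑ i ∈ Finset.Icc 1 k, (1 - 1 / Real.sqrt κ) ^ (-(i : ℝ) / 2) * ε i) ^ 2 := by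
  intro k _
  subst hκ hβ
  have hs : 1 < √(L / μ) := by
    rw [Real.lt_sqrt zero_le_one, one_pow, one_lt_div hμ]; exact hμL
  have hL : L = μ * √(L / μ) ^ 2 := by
    rw [Real.sq_sqrt (div_nonneg (hμ.trans hμL).le hμ.le), mul_div_cancel₀ _ hμ.ne']
  have hsc : StrongConvexOn (V : Set (EuclideanSpace ℝ (Fin m))) μ F :=
    ⟨V.convex, fun u hu w hw a b ha hb hab => by
      obtain rfl : b = 1 - a := by linarith
      have := hFsc u hu w hw a ha (by linarith)
      simp only [smul_eq_mul]
      linarith⟩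
  have hmem := inexactNesterov_iterates_mem hFgradV heV (hy0 ▸ V.zero_mem) (hv0 ▸ V.zero_mem)
    hyk hvk
  have hq : 0 ≤ 1 - 1 / √(L / μ) := by
    rw [sub_nonneg, div_le_one (by positivity)]; exact hs.le
  simp only [Real.rpow_neg_natCast_div_two hq]
  exact inexactNesterov_sub_le hμ hs hL hFdiff hFsmooth hsc hystarV hystar hmem heε
    (hv0.trans hy0.symm) hyk hvk k

/-- Inexact accelerated gradient descent under strong convexity on a subspace `V`:
if `F` is convex, differentiable, `L`-smooth, `μ`-strongly convex on `V` (`0 < μ < L`),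
`∇F` maps `V` to `V`, and `F` attains its global minimum at `y* ∈ V`, then the inexact
accelerated iterates starting from `0`, with errors `e^{k+1} ∈ V`, `‖e^{k+1}‖ ≤ ε_{k+1}`,
satisfy for all `k ≥ 1`:
`F(y^k) − F(y*) ≤ (1 − 1/√κ)^k (√(2(F(y⁰) − F(y*))) + √(2/μ) Σ_{i=1}^k (1−1/√κ)^{−i/2} ε_i)²`
where `κ = L/μ`. -/
theorem stmt9 {m : ℕ} (μ L : ℝ) (hμ : 0 < μ) (hμL : μ < L)
    (V : Submodule ℝ (EuclideanSpace ℝ (Fin m)))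
    (F : EuclideanSpace ℝ (Fin m) → ℝ)
    (hFconv : ConvexOn ℝ Set.univ F)
    (hFdiff : Differentiable ℝ F)
    (hFsmooth : ∀ u v : EuclideanSpace ℝ (Fin m),
      ‖gradient F u - gradient F v‖ ≤ L * ‖u - v‖)
    (hFsc : ∀ u ∈ V, ∀ v ∈ V, ∀ θ : ℝ, 0 ≤ θ → θ ≤ 1 →
      F (θ • u + (1 - θ) • v) ≤ θ * F u + (1 - θ) * F v
        - μ / 2 * (θ * (1 - θ) * ‖u - v‖ ^ 2))
    (hFgradV : ∀ v ∈ V, gradient F v ∈ V)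
    (ystar : EuclideanSpace ℝ (Fin m)) (hystarV : ystar ∈ V)
    (hystar : ∀ z, F ystar ≤ F z)
    (κ β : ℝ) (hκ : κ = L / μ) (hβ : β = (Real.sqrt κ - 1) / (Real.sqrt κ + 1))
    (ε : ℕ → ℝ) (hε : ∀ k, 0 ≤ ε k)
    (y v : ℕ → EuclideanSpace ℝ (Fin m))
    (e : ℕ → EuclideanSpace ℝ (Fin m))
    (hy0 : y 0 = 0) (hv0 : v 0 = 0)
    (heV : ∀ k, e (k + 1) ∈ V)
    (heε : ∀ k, ‖e (k + 1)‖ ≤ ε (k + 1))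
    (hyk : ∀ k, y (k + 1) = v k - (1 / L) • (gradient F (v k) + e (k + 1)))
    (hvk : ∀ k, v (k + 1) = y (k + 1) + β • (y (k + 1) - y k)) :
    ∀ k : ℕ, 1 ≤ k →
      F (y k) - F ystar ≤ (1 - 1 / Real.sqrt κ) ^ k *
        (Real.sqrt (2 * (F (y 0) - F ystar))
          + Real.sqrt (2 / μ) *
            ∑ i ∈ Finset.Icc 1 k, (1 - 1 / Real.sqrt κ) ^ (-(i : ℝ) / 2) * ε i) ^ 2 :=
  stmt9_general μ L hμ hμL V F hFdiff hFsmooth hFsc hFgradV ystar hystarV hystar κ β hκ hβ ε y v e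
    hy0 hv0 heV heε hyk hvk
end

section
/- Let F : ℝ^m → ℝ be convex, differentiable, and L-smooth (L > 0), attaining its global minimum at some y*. Let ε₁, ε₂, … ≥ 0 and define sequences by v⁰ = y⁰ and, for k ≥ 0: y^{k+1} = v^k − (1/L)(∇F(v^k) + e^{k+1}) with ‖e^{k+1}‖ ≤ ε_{k+1}, and v^{k+1} = y^{k+1} + (k/(k+3))(y^{k+1} − y^k). If there exist a > 0 and δ > 0 such that ε_k ≤ a·k^{−(2+δ)} for all k ≥ 1, then there exists b > 0 such that F(y^k) − F(y*) ≤ b/k² for all k ≥ 1. -/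
/-!
A Lyapunov argument. Put `t_k = (k + 2) / 2` and
`Φ_k = ((k + 1) / 2)² (F(y^k) − F(y*)) + (L / 2) ‖t_k v^k − (t_k − 1) y^k − y*‖²`.
Combining the inexact gradient step from `v^k` with convexity (at `y^k` and `y*`, weights
`t_k (t_k − 1)` and `t_k`) and the descent lemma, the vector terms telescope because the momentum
`k / (k + 3)` equals `(t_k − 1) / t_{k+1}`, and `t_k (t_k − 1) ≤ ((k + 1) / 2)²`. What is left is
`Φ_{k+1} ≤ Φ_k + t_k ε_{k+1} √(2 / L) √Φ_{k+1}`, hence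
`√Φ_k ≤ √Φ_0 + √(2 / L) ∑ t_i ε_{i+1}`, and the sum stays bounded since `∑ k ε_k < ∞` when
`ε_k = O(k^{−2−δ})`. So `F(y^k) − F(y*) ≤ 4 Φ_k / (k + 1)² = O(1 / k²)`.
-/

open scoped RealInnerProductSpace

open Finset

section Gradient

variable {E : Type*} [NormedAddCommGroup E] [InnerProductSpace ℝ E] [CompleteSpace E]
  {F : E → ℝ}

lemma HasGradientAt.hasDerivAt_comp_add_smul {F' x d : E} {t : ℝ}
    (h : HasGradientAt F F' (x + t • d)) :
    HasDerivAt (fun s : ℝ => F (x + s • d)) ⟪F', d⟫ t := by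
  have hline : HasDerivAt (fun s : ℝ => x + s • d) d t := by
    simpa using ((hasDerivAt_id t).smul_const d).const_add x
  simpa [InnerProductSpace.toDual_apply_apply, Function.comp_def] using
    h.hasFDerivAt.comp_hasDerivAt t hline

lemma ConvexOn.add_inner_gradient_le_s10 (hconv : ConvexOn ℝ Set.univ F) (hdiff : Differentiable ℝ F)
    (x z : E) : F x + ⟪gradient F x, z - x⟫ ≤ F z := by
  have hline : ConvexOn ℝ Set.univ (fun s : ℝ => F (x + s • (z - x))) := by
    have := hconv.comp_affineMap (AffineMap.lineMap x z)
    simpa only [Set.preimage_univ, Function.comp_def, AffineMap.lineMap_apply_module',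
      add_comm] using this
  have h0 : HasDerivAt (fun s : ℝ => F (x + s • (z - x))) ⟪gradient F x, z - x⟫ 0 :=
    (hdiff _).hasGradientAt.hasDerivAt_comp_add_smul.congr_deriv (by simp)
  have := hline.le_slope_of_hasDerivAt trivial trivial one_pos h0
  simp only [slope_def_field, zero_smul, add_zero, one_smul, add_sub_cancel, sub_zero,
    div_one] at this
  linarith

lemma le_add_inner_gradient_add_sq_of_lipschitz {L : ℝ} (hdiff : Differentiable ℝ F)
    (hLip : ∀ u v : E, ‖gradient F u - gradient F v‖ ≤ L * ‖u - v‖) (x y : E) :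
    F y ≤ F x + ⟪gradient F x, y - x⟫ + L / 2 * ‖y - x‖ ^ 2 := by
  set d := y - x
  let g : ℝ → ℝ := fun s => F (x + s • d) - s * ⟪gradient F x, d⟫ - L / 2 * s ^ 2 * ‖d‖ ^ 2
  have hg : ∀ s,
      HasDerivAt g (⟪gradient F (x + s • d) - gradient F x, d⟫ - L * s * ‖d‖ ^ 2) s := fun s => by
    refine ((((hdiff _).hasGradientAt.hasDerivAt_comp_add_smul (x := x) (d := d) (t := s)).sub
      ((hasDerivAt_id s).mul_const ⟪gradient F x, d⟫)).sub
      (((hasDerivAt_pow 2 s).const_mul (L / 2)).mul_const (‖d‖ ^ 2))).congr_deriv ?_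
    rw [inner_sub_left]
    ring
  obtain ⟨c, hc, hslope⟩ := exists_hasDerivAt_eq_slope g _ one_pos
    (fun s _ => (hg s).continuousAt.continuousWithinAt) (fun s _ => hg s)
  have hderiv : ⟪gradient F (x + c • d) - gradient F x, d⟫ ≤ L * c * ‖d‖ ^ 2 :=
    calc ⟪gradient F (x + c • d) - gradient F x, d⟫
        ≤ ‖gradient F (x + c • d) - gradient F x‖ * ‖d‖ := real_inner_le_norm _ _
      _ ≤ L * ‖c • d‖ * ‖d‖ := by
          gcongr
          simpa using hLip (x + c • d) x
      _ = L * c * ‖d‖ ^ 2 := by rw [norm_smul, Real.norm_of_nonneg hc.1.le]; ring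
  have hg0 : g 0 = F x := by simp [g]
  have hg1 : g 1 = F y - ⟪gradient F x, d⟫ - L / 2 * ‖d‖ ^ 2 := by simp [g, d]
  rw [hg0, hg1, sub_zero, div_one] at hslope
  linarith

lemma inexact_gradient_step_le {L : ℝ} (hL : 0 < L) (hconv : ConvexOn ℝ Set.univ F)
    (hdiff : Differentiable ℝ F) (hLip : ∀ u v : E, ‖gradient F u - gradient F v‖ ≤ L * ‖u - v‖)
    {v w e : E} (hw : w = v - (1 / L) • (gradient F v + e)) (z : E) :
    F w - F z ≤ L / 2 * (‖v - z‖ ^ 2 - ‖w - z‖ ^ 2) - ⟪e, w - z⟫ := by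
  have hgrad : gradient F v = L • (v - w) - e := by
    rw [hw, sub_sub_cancel, smul_smul, mul_one_div_cancel hL.ne', one_smul, add_sub_cancel_right]
  have hdescent := le_add_inner_gradient_add_sq_of_lipschitz hdiff hLip v w
  have hlower := hconv.add_inner_gradient_le_s10 hdiff v z
  have hsplit : v - z = (v - w) + (w - z) := by abel
  rw [hgrad] at hdescent hlower
  have hwv : w - v = -(v - w) := (neg_sub v w).symm
  have hzv : z - v = -((v - w) + (w - z)) := by abel
  rw [hsplit, norm_add_sq_real]
  rw [hwv, norm_neg] at hdescent
  rw [hzv] at hlower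
  have hexpand : ∀ u, ⟪L • (v - w) - e, u⟫ = L * ⟪v - w, u⟫ - ⟪e, u⟫ := fun u => by
    rw [inner_sub_left, real_inner_smul_left]
  simp only [inner_neg_right, inner_add_right, hexpand, real_inner_self_eq_norm_sq]
    at hdescent hlower
  linarith

lemma inexact_gradient_step_weighted {L : ℝ} (hL : 0 < L) (hconv : ConvexOn ℝ Set.univ F)
    (hdiff : Differentiable ℝ F) (hLip : ∀ u v : E, ‖gradient F u - gradient F v‖ ≤ L * ‖u - v‖)
    {v w e : E} (hw : w = v - (1 / L) • (gradient F v + e)) {t : ℝ} (ht : 1 ≤ t) (y z : E) :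
    t ^ 2 * (F w - F z) + L / 2 * ‖t • w - (t - 1) • y - z‖ ^ 2 ≤
      t * (t - 1) * (F y - F z) + L / 2 * ‖t • v - (t - 1) • y - z‖ ^ 2 +
        t * ‖e‖ * ‖t • w - (t - 1) • y - z‖ := by
  have hy := inexact_gradient_step_le hL hconv hdiff hLip hw y
  have hz := inexact_gradient_step_le hL hconv hdiff hLip hw z
  have hnorms : t * (t - 1) * (‖v - y‖ ^ 2 - ‖w - y‖ ^ 2) + t * (‖v - z‖ ^ 2 - ‖w - z‖ ^ 2)
      = ‖t • v - (t - 1) • y - z‖ ^ 2 - ‖t • w - (t - 1) • y - z‖ ^ 2 := by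
    simp only [← real_inner_self_eq_norm_sq, inner_sub_left, inner_sub_right,
      real_inner_smul_left, real_inner_smul_right]
    ring
  have hinner : t * (t - 1) * ⟪e, w - y⟫ + t * ⟪e, w - z⟫ = t * ⟪e, t • w - (t - 1) • y - z⟫ := by
    simp only [inner_sub_right, real_inner_smul_right]
    ring
  have hcs : -⟪e, t • w - (t - 1) • y - z⟫ ≤ ‖e‖ * ‖t • w - (t - 1) • y - z‖ :=
    (neg_le_abs _).trans (abs_real_inner_le_norm _ _)
  have ht1 : 0 ≤ t - 1 := by linarith
  have ht0 : 0 ≤ t := by linarith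
  linear_combination mul_le_mul_of_nonneg_left hy (mul_nonneg ht0 ht1) +
    mul_le_mul_of_nonneg_left hz ht0 + mul_le_mul_of_nonneg_left hcs ht0 + L / 2 * hnorms -
    hinner

end Gradient

lemma Real.sqrt_le_sqrt_add_of_le_add_mul_sqrt {x A c : ℝ} (hA : 0 ≤ A) (hc : 0 ≤ c)
    (h : x ≤ A + c * √x) : √x ≤ √A + c := by
  by_contra! hlt
  have hx : 0 < x := Real.sqrt_pos.mp ((add_nonneg (Real.sqrt_nonneg A) hc).trans_lt hlt)
  nlinarith [Real.sq_sqrt hx.le, Real.sq_sqrt hA, Real.sqrt_nonneg A]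

lemma sqrt_le_sqrt_add_sum_of_le_add_mul_sqrt {u c : ℕ → ℝ} (hu : ∀ k, 0 ≤ u k)
    (hc : ∀ k, 0 ≤ c k) (h : ∀ k, u (k + 1) ≤ u k + c k * √(u (k + 1))) (k : ℕ) :
    √(u k) ≤ √(u 0) + ∑ i ∈ range k, c i := by
  induction k with
  | zero => simp
  | succ k ih =>
    rw [sum_range_succ]
    linarith [Real.sqrt_le_sqrt_add_of_le_add_mul_sqrt (hu k) (hc k) (h k)]

lemma summable_natCast_mul_of_le_rpow {ε : ℕ → ℝ} {a δ : ℝ} (hδ : 0 < δ) (hε : ∀ k, 0 ≤ ε k)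
    (hdecay : ∀ k : ℕ, 1 ≤ k → ε k ≤ a * (k : ℝ) ^ (-(2 + δ))) :
    Summable fun k : ℕ => (k : ℝ) * ε k := by
  refine Summable.of_nonneg_of_le (fun k => mul_nonneg k.cast_nonneg (hε k)) (fun k => ?_)
    ((Real.summable_nat_rpow.mpr (by linarith : -(1 + δ) < -1)).mul_left a)
  rcases Nat.eq_zero_or_pos k with rfl | hk
  · rw [Nat.cast_zero, zero_mul, Real.zero_rpow (by linarith), mul_zero]
  have hkpos : (0 : ℝ) < k := Nat.cast_pos.mpr hk
  calc (k : ℝ) * ε k ≤ k * (a * (k : ℝ) ^ (-(2 + δ))) := by gcongr; exact hdecay k hk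
    _ = a * (k : ℝ) ^ (-(1 + δ)) := by
      rw [show -(1 + δ) = 1 + -(2 + δ) by ring, Real.rpow_add hkpos, Real.rpow_one]
      ring

section AcceleratedGradient

variable {E : Type*} [NormedAddCommGroup E] [InnerProductSpace ℝ E]
  {F : E → ℝ} {L : ℝ} {z : E} {y v : ℕ → E}

noncomputable def accelEnergy (L : ℝ) (F : E → ℝ) (z : E) (y v : ℕ → E) (k : ℕ) : ℝ :=
  (((k : ℝ) + 1) / 2) ^ 2 * (F (y k) - F z) +
    L / 2 * ‖(((k : ℝ) + 2) / 2) • v k - ((k : ℝ) / 2) • y k - z‖ ^ 2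

lemma sq_mul_sub_le_accelEnergy (hL : 0 ≤ L) (k : ℕ) :
    (((k : ℝ) + 1) / 2) ^ 2 * (F (y k) - F z) ≤ accelEnergy L F z y v k :=
  le_add_of_nonneg_right (by positivity)

lemma norm_sq_le_accelEnergy (hz : ∀ x, F z ≤ F x) (k : ℕ) :
    L / 2 * ‖(((k : ℝ) + 2) / 2) • v k - ((k : ℝ) / 2) • y k - z‖ ^ 2 ≤ accelEnergy L F z y v k :=
  le_add_of_nonneg_left (mul_nonneg (by positivity) (sub_nonneg.mpr (hz _)))

lemma accelEnergy_nonneg (hL : 0 ≤ L) (hz : ∀ x, F z ≤ F x) (k : ℕ) :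
    0 ≤ accelEnergy L F z y v k :=
  (by positivity : (0 : ℝ) ≤ L / 2 * _).trans (norm_sq_le_accelEnergy hz k)

lemma accelEnergy_succ_le [CompleteSpace E] {e : ℕ → E} (hL : 0 < L)
    (hconv : ConvexOn ℝ Set.univ F) (hdiff : Differentiable ℝ F)
    (hLip : ∀ u v : E, ‖gradient F u - gradient F v‖ ≤ L * ‖u - v‖)
    (hz : ∀ x, F z ≤ F x)
    (hy : ∀ k, y (k + 1) = v k - (1 / L) • (gradient F (v k) + e (k + 1)))
    (hv : ∀ k : ℕ, v (k + 1) = y (k + 1) + ((k : ℝ) / (k + 3)) • (y (k + 1) - y k)) (k : ℕ) :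
    accelEnergy L F z y v (k + 1) ≤ accelEnergy L F z y v k +
      ((k + 2) / 2 * ‖e (k + 1)‖ * √(2 / L)) * √(accelEnergy L F z y v (k + 1)) := by
  have ht : 1 ≤ ((k : ℝ) + 2) / 2 := by linarith [k.cast_nonneg (α := ℝ)]
  have hstep := inexact_gradient_step_weighted hL hconv hdiff hLip (hy k) ht (y k) z
  rw [show ((k : ℝ) + 2) / 2 - 1 = (k : ℝ) / 2 by ring] at hstep
  set u : E := (((k : ℝ) + 2) / 2) • y (k + 1) - ((k : ℝ) / 2) • y k - z
  have hmomentum :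
      ((((k + 1 : ℕ) : ℝ) + 2) / 2) • v (k + 1) - (((k + 1 : ℕ) : ℝ) / 2) • y (k + 1) - z = u := by
    have hk3 : (k : ℝ) + 3 ≠ 0 := by positivity
    rw [hv k]
    push_cast
    match_scalars <;> field_simp <;> ring
  have hnorm : ‖u‖ ≤ √(2 / L) * √(accelEnergy L F z y v (k + 1)) := by
    rw [← Real.sqrt_mul (by positivity), ← Real.sqrt_sq (norm_nonneg u)]
    refine Real.sqrt_le_sqrt ?_
    have := norm_sq_le_accelEnergy (L := L) (v := v) (y := y) hz (k + 1)
    rw [hmomentum] at this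
    rw [div_mul_eq_mul_div, le_div_iff₀ hL]
    linarith
  have herr := mul_le_mul_of_nonneg_left hnorm
    (by positivity : 0 ≤ ((k : ℝ) + 2) / 2 * ‖e (k + 1)‖)
  have hEsucc : accelEnergy L F z y v (k + 1) =
      (((k : ℝ) + 2) / 2) ^ 2 * (F (y (k + 1)) - F z) + L / 2 * ‖u‖ ^ 2 := by
    rw [accelEnergy, hmomentum]
    push_cast
    ring
  have hE : accelEnergy L F z y v k = (((k : ℝ) + 1) / 2) ^ 2 * (F (y k) - F z) +
      L / 2 * ‖(((k : ℝ) + 2) / 2) • v k - ((k : ℝ) / 2) • y k - z‖ ^ 2 := rfl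
  linear_combination hstep + herr + 1 / 4 * sub_nonneg.mpr (hz (y k)) + hEsucc - hE

end AcceleratedGradient

theorem stmt10_general {m : ℕ} (L : ℝ) (hL : 0 < L)
    (F : EuclideanSpace ℝ (Fin m) → ℝ)
    (hFconv : ConvexOn ℝ Set.univ F)
    (hFdiff : Differentiable ℝ F)
    (hFsmooth : ∀ u v : EuclideanSpace ℝ (Fin m),
      ‖gradient F u - gradient F v‖ ≤ L * ‖u - v‖)
    (ystar : EuclideanSpace ℝ (Fin m)) (hystar : ∀ z, F ystar ≤ F z)
    (ε : ℕ → ℝ) (hε : ∀ k, 0 ≤ ε k)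
    (y v : ℕ → EuclideanSpace ℝ (Fin m))
    (e : ℕ → EuclideanSpace ℝ (Fin m))
    (heε : ∀ k, ‖e (k + 1)‖ ≤ ε (k + 1))
    (hyk : ∀ k, y (k + 1) = v k - (1 / L) • (gradient F (v k) + e (k + 1)))
    (hvk : ∀ k : ℕ, v (k + 1) = y (k + 1) + ((k : ℝ) / (k + 3)) • (y (k + 1) - y k))
    (a δ : ℝ) (hδ : 0 < δ)
    (hεdecay : ∀ k : ℕ, 1 ≤ k → ε k ≤ a * (k : ℝ) ^ (-(2 + δ))) :
    ∃ b > 0, ∀ k : ℕ, 1 ≤ k → F (y k) - F ystar ≤ b / (k : ℝ) ^ 2 := by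
  set Φ := accelEnergy L F ystar y v
  set c : ℕ → ℝ := fun k => ((k : ℝ) + 2) / 2 * ‖e (k + 1)‖ * √(2 / L)
  have hsqrt := sqrt_le_sqrt_add_sum_of_le_add_mul_sqrt (accelEnergy_nonneg hL.le hystar)
    (fun k => by positivity) (accelEnergy_succ_le hL hFconv hFdiff hFsmooth hystar hyk hvk)
  have hsum : Summable fun k : ℕ => ((k + 1 : ℕ) : ℝ) * ε (k + 1) :=
    (summable_nat_add_iff 1).mpr (summable_natCast_mul_of_le_rpow hδ hε hεdecay)
  set C := ∑' k : ℕ, ((k + 1 : ℕ) : ℝ) * ε (k + 1)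
  have hc : ∀ k, ∑ i ∈ range k, c i ≤ C * √(2 / L) := fun k => by
    rw [← sum_mul]
    gcongr
    refine (sum_le_sum fun i _ => ?_).trans
      (hsum.sum_le_tsum _ fun i _ => mul_nonneg i.succ.cast_nonneg (hε _))
    push_cast
    gcongr
    · linarith [i.cast_nonneg (α := ℝ)]
    · exact heε i
  set B := √(Φ 0) + C * √(2 / L)
  refine ⟨4 * B ^ 2 + 1, by positivity, fun k hk => ?_⟩
  have hΦ : Φ k ≤ B ^ 2 := (Real.sqrt_le_iff.mp ((hsqrt k).trans (by linarith [hc k]))).2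
  have hgap := (sq_mul_sub_le_accelEnergy (v := v) hL.le k).trans hΦ
  have hkpos : (0 : ℝ) < k := by exact_mod_cast hk
  have hweight : (k : ℝ) ^ 2 ≤ 4 * (((k : ℝ) + 1) / 2) ^ 2 := by nlinarith
  rw [le_div_iff₀ (by positivity)]
  nlinarith [mul_le_mul_of_nonneg_left hweight (sub_nonneg.mpr (hystar (y k)))]

/-- Inexact accelerated gradient descent for a convex `L`-smooth `F` attaining its
minimum at `y*`, with momentum `β_k = k/(k+3)`: if the gradient errors satisfy
`ε_k ≤ a k^{−(2+δ)}` for some `a, δ > 0`, then `F(y^k) − F(y*) ≤ b / k²` for some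
`b > 0` and all `k ≥ 1`. -/
theorem stmt10 {m : ℕ} (L : ℝ) (hL : 0 < L)
    (F : EuclideanSpace ℝ (Fin m) → ℝ)
    (hFconv : ConvexOn ℝ Set.univ F)
    (hFdiff : Differentiable ℝ F)
    (hFsmooth : ∀ u v : EuclideanSpace ℝ (Fin m),
      ‖gradient F u - gradient F v‖ ≤ L * ‖u - v‖)
    (ystar : EuclideanSpace ℝ (Fin m)) (hystar : ∀ z, F ystar ≤ F z)
    (ε : ℕ → ℝ) (hε : ∀ k, 0 ≤ ε k)
    (y v : ℕ → EuclideanSpace ℝ (Fin m))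
    (e : ℕ → EuclideanSpace ℝ (Fin m))
    (hv0 : v 0 = y 0)
    (heε : ∀ k, ‖e (k + 1)‖ ≤ ε (k + 1))
    (hyk : ∀ k, y (k + 1) = v k - (1 / L) • (gradient F (v k) + e (k + 1)))
    (hvk : ∀ k : ℕ, v (k + 1) = y (k + 1) + ((k : ℝ) / (k + 3)) • (y (k + 1) - y k))
    (a δ : ℝ) (ha : 0 < a) (hδ : 0 < δ)
    (hεdecay : ∀ k : ℕ, 1 ≤ k → ε k ≤ a * (k : ℝ) ^ (-(2 + δ))) :
    ∃ b > 0, ∀ k : ℕ, 1 ≤ k → F (y k) - F ystar ≤ b / (k : ℝ) ^ 2 :=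
  stmt10_general L hL F hFconv hFdiff hFsmooth ystar hystar ε hε y v e heε hyk hvk a δ hδ hεdecay
end
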